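/- Let V and W be finite-dimensional real vector spaces and φ : V → W a linear map. If L ⊆ 𝕋V = V × V* is a Lagrangian subspace with respect to the pairing ⟨(u,ξ),(v,η)⟩ = ξ(v) + η(u), then the forward image φ_!(L) := {(φ(u), η) : u ∈ V, η ∈ W*, (u, η ∘ φ) ∈ L} is a Lagrangian subspace of 𝕋W = W × W*. -/

import Mathlib

open Module

variable {V W : Type*} [AddCommGroup V] [Module ℝ V] [AddCommGroup W] [Module ℝ W]

/-- The canonical symmetric pairing on the generalized tangent space `𝕋V = V × V*`:
`⟨(u,ξ),(v,η)⟩ = ξ(v) + η(u)`. -/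
noncomputable def gpair : (V × Module.Dual ℝ V) →ₗ[ℝ] (V × Module.Dual ℝ V) →ₗ[ℝ] ℝ :=
  LinearMap.mk₂ ℝ (fun a b => a.2 b.1 + b.2 a.1)
    (fun a a' b => by
      simp only [Prod.fst_add, Prod.snd_add, LinearMap.add_apply, map_add]; ring)
    (fun r a b => by
      simp only [Prod.smul_fst, Prod.smul_snd, LinearMap.smul_apply, map_smul,
        smul_eq_mul]; ring)
    (fun a b b' => by
      simp only [Prod.fst_add, Prod.snd_add, LinearMap.add_apply, map_add]; ring)
    (fun r a b => by
      simp only [Prod.smul_fst, Prod.smul_snd, LinearMap.smul_apply, map_smul,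
        smul_eq_mul]; ring)

/-- Orthogonal complement with respect to the canonical pairing on `𝕋V`. -/
noncomputable def gperp (S : Submodule ℝ (V × Module.Dual ℝ V)) :
    Submodule ℝ (V × Module.Dual ℝ V) where
  carrier := {a | ∀ b ∈ S, gpair a b = 0}
  add_mem' := by
    intro a b ha hb c hc
    rw [map_add, LinearMap.add_apply, ha c hc, hb c hc, add_zero]
  zero_mem' := by
    intro c hc
    rw [map_zero, LinearMap.zero_apply]
  smul_mem' := by
    intro r a ha c hc
    rw [map_smul, LinearMap.smul_apply, ha c hc, smul_zero]

/-- A subspace of `𝕋V` is Lagrangian if it equals its own orthogonal complement. -/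
def IsLagrangian (L : Submodule ℝ (V × Module.Dual ℝ V)) : Prop :=
  gperp L = L

/-- A linear map `π : V* → V` is skew-symmetric. -/
def IsSkew (π : Module.Dual ℝ V →ₗ[ℝ] V) : Prop :=
  ∀ ξ η : Module.Dual ℝ V, η (π ξ) = -(ξ (π η))

/-- The tangent product `L ⋆ R = {(u, ξ+η) : (u,ξ) ∈ L, (u,η) ∈ R}`. -/
def tanProd (L R : Submodule ℝ (V × Module.Dual ℝ V)) :
    Submodule ℝ (V × Module.Dual ℝ V) where
  carrier := {a | ∃ ξ η : Module.Dual ℝ V, (a.1, ξ) ∈ L ∧ (a.1, η) ∈ R ∧ a.2 = ξ + η}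
  add_mem' := by
    rintro a b ⟨ξ, η, h1, h2, h3⟩ ⟨ξ', η', h1', h2', h3'⟩
    refine ⟨ξ + ξ', η + η', ?_, ?_, ?_⟩
    · simpa [Prod.fst_add] using L.add_mem h1 h1'
    · simpa [Prod.fst_add] using R.add_mem h2 h2'
    · simp only [Prod.snd_add, h3, h3']; abel
  zero_mem' := ⟨0, 0, by simpa using (show ((0 : V), (0 : Module.Dual ℝ V)) ∈ L from L.zero_mem), by simpa using (show ((0 : V), (0 : Module.Dual ℝ V)) ∈ R from R.zero_mem), by simp⟩
  smul_mem' := by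
    rintro r a ⟨ξ, η, h1, h2, h3⟩
    refine ⟨r • ξ, r • η, ?_, ?_, ?_⟩
    · simpa [Prod.smul_fst] using L.smul_mem r h1
    · simpa [Prod.smul_fst] using R.smul_mem r h2
    · simp only [Prod.smul_snd, h3, smul_add]

/-- The cotangent product `L ⊛ R = {(u+v, ξ) : (u,ξ) ∈ L, (v,ξ) ∈ R}`. -/
def cotProd (L R : Submodule ℝ (V × Module.Dual ℝ V)) :
    Submodule ℝ (V × Module.Dual ℝ V) where
  carrier := {a | ∃ u v : V, (u, a.2) ∈ L ∧ (v, a.2) ∈ R ∧ a.1 = u + v}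
  add_mem' := by
    rintro a b ⟨u, v, h1, h2, h3⟩ ⟨u', v', h1', h2', h3'⟩
    refine ⟨u + u', v + v', ?_, ?_, ?_⟩
    · simpa [Prod.snd_add] using L.add_mem h1 h1'
    · simpa [Prod.snd_add] using R.add_mem h2 h2'
    · simp only [Prod.fst_add, h3, h3']; abel
  zero_mem' := ⟨0, 0, by simpa using (show ((0 : V), (0 : Module.Dual ℝ V)) ∈ L from L.zero_mem), by simpa using (show ((0 : V), (0 : Module.Dual ℝ V)) ∈ R from R.zero_mem), by simp⟩
  smul_mem' := by
    rintro r a ⟨u, v, h1, h2, h3⟩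
    refine ⟨r • u, r • v, ?_, ?_, ?_⟩
    · simpa [Prod.smul_snd] using L.smul_mem r h1
    · simpa [Prod.smul_snd] using R.smul_mem r h2
    · simp only [Prod.smul_fst, h3, smul_add]

/-- The backward image `φ^!(L) = {(u, η ∘ φ) : (φ(u), η) ∈ L}`. -/
def back (φ : V →ₗ[ℝ] W) (L : Submodule ℝ (W × Module.Dual ℝ W)) :
    Submodule ℝ (V × Module.Dual ℝ V) where
  carrier := {a | ∃ η : Module.Dual ℝ W, (φ a.1, η) ∈ L ∧ a.2 = η.comp φ}
  add_mem' := by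
    rintro a b ⟨η, h1, h2⟩ ⟨η', h1', h2'⟩
    refine ⟨η + η', ?_, ?_⟩
    · simpa [Prod.fst_add, map_add] using L.add_mem h1 h1'
    · simp only [Prod.snd_add, h2, h2', LinearMap.add_comp]
  zero_mem' := ⟨0, by simpa using (show ((0 : W), (0 : Module.Dual ℝ W)) ∈ L from L.zero_mem), by simp⟩
  smul_mem' := by
    rintro r a ⟨η, h1, h2⟩
    refine ⟨r • η, ?_, ?_⟩
    · simpa [Prod.smul_fst, map_smul] using L.smul_mem r h1
    · simp only [Prod.smul_snd, h2, LinearMap.smul_comp]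

/-- The forward image `φ_!(L) = {(φ(u), η) : (u, η ∘ φ) ∈ L}`. -/
def fwd (φ : V →ₗ[ℝ] W) (L : Submodule ℝ (V × Module.Dual ℝ V)) :
    Submodule ℝ (W × Module.Dual ℝ W) where
  carrier := {b | ∃ u : V, φ u = b.1 ∧ (u, b.2.comp φ) ∈ L}
  add_mem' := by
    rintro a b ⟨u, h1, h2⟩ ⟨u', h1', h2'⟩
    refine ⟨u + u', ?_, ?_⟩
    · simp only [map_add, h1, h1', Prod.fst_add]
    · have := L.add_mem h2 h2'
      simpa [Prod.snd_add, LinearMap.add_comp] using this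
  zero_mem' := ⟨0, by simp, by simpa using (show ((0 : V), (0 : Module.Dual ℝ V)) ∈ L from L.zero_mem)⟩
  smul_mem' := by
    rintro r a ⟨u, h1, h2⟩
    refine ⟨r • u, ?_, ?_⟩
    · simp only [map_smul, h1, Prod.smul_fst]
    · have := L.smul_mem r h2
      simpa [Prod.smul_snd, LinearMap.smul_comp] using this

/-- The graph `Gr(π) = {(π(ξ), ξ) : ξ ∈ V*}` of a map `π : V* → V`. -/
def gr (π : Module.Dual ℝ V →ₗ[ℝ] V) : Submodule ℝ (V × Module.Dual ℝ V) where
  carrier := {a | π a.2 = a.1}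
  add_mem' := by
    intro a b ha hb
    simp only [Set.mem_setOf_eq, Prod.fst_add, Prod.snd_add, map_add] at *
    rw [ha, hb]
  zero_mem' := by simp
  smul_mem' := by
    intro r a ha
    simp only [Set.mem_setOf_eq, Prod.smul_fst, Prod.smul_snd, map_smul] at *
    rw [ha]

/-!
`φ_!` commutes with orthogonal complements, so `φ_!L = φ_!(L^⊥) = (φ_!L)^⊥` when `L = L^⊥`.
For the nontrivial inclusion let `(w, ζ) ⊥ φ_!L`. Pairing with the elements `(0, η)`,
`η ∘ φ = 0`, gives `w = φ u₀`. The functional `x ↦ -⟨(u₀, ζ ∘ φ), x⟩` on `L` vanishes wherever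
`x.2` kills `ker φ` (then `x.2 = η ∘ φ` and `(φ x.1, η) ∈ φ_!L`), so, `ker φ` being
finite-dimensional, it is `x ↦ x.2 k` for some `k ∈ ker φ`. Then `(u₀ + k, ζ ∘ φ) ∈ L^⊥` lies
over `(w, ζ)`.
-/

section Duality

variable {K M N : Type*} [Field K] [AddCommGroup M] [Module K M] [AddCommGroup N] [Module K N]

theorem Module.Dual.exists_comp_eq_of_ker_le {f : M →ₗ[K] N} {ξ : Module.Dual K M}
    (h : LinearMap.ker f ≤ LinearMap.ker ξ) : ∃ η : Module.Dual K N, η.comp f = ξ := by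
  show ξ ∈ LinearMap.range f.dualMap
  rw [LinearMap.range_dualMap_eq_dualAnnihilator_ker, Submodule.mem_dualAnnihilator]
  exact h

theorem Module.Dual.exists_forall_apply_eq_of_ker_le [FiniteDimensional K N]
    (S : M →ₗ[K] Module.Dual K N) (F : Module.Dual K M) (h : LinearMap.ker S ≤ LinearMap.ker F) :
    ∃ k : N, ∀ x, S x k = F x := by
  obtain ⟨g, rfl⟩ := exists_comp_eq_of_ker_le h
  obtain ⟨k, rfl⟩ := (Module.evalEquiv K N).surjective g
  exact ⟨k, fun _ => rfl⟩

theorem LinearMap.mem_range_of_forall_comp_eq_zero {f : M →ₗ[K] N} {w : N}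
    (hw : ∀ η : Module.Dual K N, η.comp f = 0 → η w = 0) : w ∈ LinearMap.range f := by
  rw [← Subspace.forall_mem_dualAnnihilator_apply_eq_zero_iff,
    ← LinearMap.ker_dualMap_eq_dualAnnihilator_range]
  exact hw

end Duality

@[simp]
theorem gpair_apply (a b : V × Module.Dual ℝ V) : gpair a b = a.2 b.1 + b.2 a.1 := rfl

theorem fwd_gperp_le_gperp_fwd (φ : V →ₗ[ℝ] W) (L : Submodule ℝ (V × Module.Dual ℝ V)) :
    fwd φ (gperp L) ≤ gperp (fwd φ L) := by
  rintro ⟨-, η⟩ ⟨u, rfl, hu⟩ ⟨-, η'⟩ ⟨v, rfl, hv⟩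
  simpa using hu _ hv

theorem fst_mem_range_of_mem_gperp_fwd {φ : V →ₗ[ℝ] W} {L : Submodule ℝ (V × Module.Dual ℝ V)}
    {a : W × Module.Dual ℝ W} (ha : a ∈ gperp (fwd φ L)) : a.1 ∈ LinearMap.range φ := by
  refine LinearMap.mem_range_of_forall_comp_eq_zero fun η hη => ?_
  have h0 : ((0 : W), η) ∈ fwd φ L := ⟨0, map_zero φ, by rw [hη]; exact L.zero_mem⟩
  simpa using ha _ h0

theorem gperp_fwd_le_fwd_gperp [FiniteDimensional ℝ V] (φ : V →ₗ[ℝ] W)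
    (L : Submodule ℝ (V × Module.Dual ℝ V)) : gperp (fwd φ L) ≤ fwd φ (gperp L) := by
  rintro ⟨w, ζ⟩ ha
  obtain ⟨u₀, rfl⟩ := fst_mem_range_of_mem_gperp_fwd ha
  let S : L →ₗ[ℝ] Module.Dual ℝ (LinearMap.ker φ) :=
    (LinearMap.ker φ).subtype.dualMap ∘ₗ LinearMap.snd ℝ V (Module.Dual ℝ V) ∘ₗ L.subtype
  let F : Module.Dual ℝ L := -(gpair (u₀, ζ.comp φ) ∘ₗ L.subtype)
  have hSF : LinearMap.ker S ≤ LinearMap.ker F := by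
    rintro ⟨⟨v, ξ⟩, hx⟩ hSx
    obtain ⟨η, rfl⟩ := Module.Dual.exists_comp_eq_of_ker_le fun u hu =>
      LinearMap.mem_ker.2 (DFunLike.congr_fun hSx ⟨u, hu⟩)
    have hperp := ha (φ v, η) ⟨v, rfl, hx⟩
    simp only [gpair_apply] at hperp
    simp only [LinearMap.mem_ker, F, LinearMap.neg_apply, LinearMap.comp_apply,
      Submodule.subtype_apply, gpair_apply]
    linarith
  obtain ⟨⟨k, hk⟩, hkF⟩ := Module.Dual.exists_forall_apply_eq_of_ker_le (K := ℝ) (M := L) S F hSF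
  refine ⟨u₀ + k, by rw [map_add, hk, add_zero], fun x hx => ?_⟩
  have hkx := hkF ⟨x, hx⟩
  simp only [S, F, LinearMap.comp_apply, LinearMap.neg_apply, Submodule.subtype_apply,
    LinearMap.dualMap_apply, gpair_apply, LinearMap.snd_apply] at hkx
  simp only [gpair_apply, LinearMap.comp_apply, map_add]
  linarith

theorem gperp_fwd [FiniteDimensional ℝ V] (φ : V →ₗ[ℝ] W)
    (L : Submodule ℝ (V × Module.Dual ℝ V)) : gperp (fwd φ L) = fwd φ (gperp L) :=
  le_antisymm (gperp_fwd_le_fwd_gperp φ L) (fwd_gperp_le_gperp_fwd φ L)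

theorem stmt4_general [FiniteDimensional ℝ V]
    (φ : V →ₗ[ℝ] W) (L : Submodule ℝ (V × Module.Dual ℝ V))
    (hL : IsLagrangian L) :
    IsLagrangian (fwd φ L) := by
  rw [IsLagrangian, gperp_fwd, hL]

theorem stmt4 [FiniteDimensional ℝ V] [FiniteDimensional ℝ W]
    (φ : V →ₗ[ℝ] W) (L : Submodule ℝ (V × Module.Dual ℝ V))
    (hL : IsLagrangian L) :
    IsLagrangian (fwd φ L) :=
  stmt4_general φ L hL
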